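/- Let X ⊆ ℝⁿ be a nonempty convex compact set with κ = max_{x∈X} ‖x‖₂ > 0, let C = cone({κ} × X) ⊆ ℝ^{1+n} with polar cone C° and metric projection π_C. Let ω_1, …, ω_T > 0 be positive weights with partial sums S_t = Σ_{τ=1}^t ω_τ, and let f_1, …, f_T ∈ ℝⁿ satisfy ‖f_t‖₂ ≤ L. Define the CBA⁺ iterates: x_1 ∈ X arbitrary; v_t = (⟨f_t, x_t⟩/κ, −f_t); u_1 = π_C(v_1); for t ≥ 1, x_{t+1} = (κ/ũ_t)·û_t if u_t = (ũ_t, û_t) ≠ 0 and x_{t+1} is an arbitrary point of X if u_t = 0; and u_{t+1} = π_C( (S_t·u_t + ω_{t+1}·v_{t+1}) / S_{t+1} ). Then the weighted regret satisfies Σ_{t=1}^T ω_t ⟨f_t, x_t⟩ − min_{x∈X} Σ_{t=1}^T ω_t ⟨f_t, x⟩ ≤ 2κL·√(Σ_{t=1}^T ω_t²). -/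

import Mathlib

/-!
The aggregates `u t` are metric projections onto a convex cone `C`, so `⟪v - π v, z⟫ ≤ 0` for
`z ∈ C` and `⟪v - π v, π v⟫ = 0`. Hence `S_t • u t` dominates the aggregated payoffs `Σ ω_j v_j`
on `C`, while the choice of `x (t + 1)` forces `⟪u t, v (t + 1)⟫ = 0`, so that
`S_t² ‖u t‖² ≤ Σ ω_j² ‖v j‖²` by Pythagoras. The regret against `y ∈ X` is
`Σ ω_t ⟪(κ, y), v t⟫ ≤ ‖(κ, y)‖ · S_T ‖u (T - 1)‖`, and `‖(κ, y)‖ ≤ √2 κ`, `‖v t‖ ≤ √2 L`.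
-/

open scoped RealInnerProductSpace
open Finset

noncomputable section

/-- `ℝ^{1+n}`, with its first coordinate a scalar block, as a Euclidean (L2) space. -/
abbrev Rone (n : ℕ) := WithLp 2 (ℝ × EuclideanSpace ℝ (Fin n))

/-- The conic hull `cone({κ} × X) = {α • (κ, x) : α ≥ 0, x ∈ X} ⊆ ℝ^{1+n}`. -/
def coneOf (n : ℕ) (κ : ℝ) (X : Set (EuclideanSpace ℝ (Fin n))) : Set (Rone n) :=
  {z | ∃ a : ℝ, 0 ≤ a ∧ ∃ x ∈ X, z = a • (WithLp.toLp 2 (κ, x) : Rone n)}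

/-- `p` is a nearest point to `u` in `C` (the metric projection of `u` onto `C`). -/
def IsProjOn {H : Type*} [NormedAddCommGroup H] (C : Set H) (u p : H) : Prop :=
  p ∈ C ∧ ∀ w ∈ C, ‖u - p‖ ≤ ‖u - w‖

section ConeProjection

variable {H : Type*} [NormedAddCommGroup H] [InnerProductSpace ℝ H] {C : Set H} {v p : H}

theorem IsProjOn.inner_sub_sub_nonpos (hC : Convex ℝ C) (hp : IsProjOn C v p) {w : H}
    (hw : w ∈ C) : ⟪v - p, w - p⟫ ≤ 0 := by
  have : Nonempty C := ⟨⟨p, hp.1⟩⟩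
  refine (norm_eq_iInf_iff_real_inner_le_zero hC hp.1).1 ?_ w hw
  exact le_antisymm (le_ciInf fun w => hp.2 w w.2)
    (ciInf_le ⟨0, Set.forall_mem_range.2 fun _ => norm_nonneg _⟩ (⟨p, hp.1⟩ : C))

/-- Testing the variational inequality with `w = 0` and `w = 2p`. -/
theorem IsProjOn.inner_sub_self_eq_zero (hC : Convex ℝ C)
    (hsmul : ∀ c : ℝ, 0 ≤ c → ∀ z ∈ C, c • z ∈ C) (hp : IsProjOn C v p) : ⟪v - p, p⟫ = 0 := by
  have h0 := hp.inner_sub_sub_nonpos hC (by simpa using hsmul 0 le_rfl p hp.1)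
  have h2 := hp.inner_sub_sub_nonpos hC (hsmul 2 zero_le_two p hp.1)
  rw [zero_sub, inner_neg_right] at h0
  rw [two_smul, add_sub_cancel_right] at h2
  linarith

theorem IsProjOn.inner_le_inner (hC : Convex ℝ C)
    (hsmul : ∀ c : ℝ, 0 ≤ c → ∀ z ∈ C, c • z ∈ C) (hp : IsProjOn C v p) {z : H} (hz : z ∈ C) :
    ⟪z, v⟫ ≤ ⟪z, p⟫ := by
  have h := hp.inner_sub_sub_nonpos hC hz
  rw [inner_sub_right, hp.inner_sub_self_eq_zero hC hsmul, sub_zero, inner_sub_left] at h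
  rw [real_inner_comm v z, real_inner_comm p z]
  linarith

theorem IsProjOn.norm_le (hC : Convex ℝ C)
    (hsmul : ∀ c : ℝ, 0 ≤ c → ∀ z ∈ C, c • z ∈ C) (hp : IsProjOn C v p) : ‖p‖ ≤ ‖v‖ := by
  have h := norm_add_sq_eq_norm_sq_add_norm_sq_real (hp.inner_sub_self_eq_zero hC hsmul)
  rw [sub_add_cancel] at h
  exact le_of_pow_le_pow_left₀ two_ne_zero (norm_nonneg _) (by nlinarith)

end ConeProjection

theorem sum_range_succ_pos_of_forall_lt {ω : ℕ → ℝ} {T : ℕ} (hω : ∀ t < T, 0 < ω t) {t : ℕ}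
    (ht : t < T) : 0 < ∑ j ∈ range (t + 1), ω j :=
  sum_pos (fun j hj => hω j (by rw [mem_range] at hj; omega)) nonempty_range_add_one

section CBAPlus

variable {H : Type*} [NormedAddCommGroup H] [InnerProductSpace ℝ H]

def IsCBAPlusSequence (C : Set H) (ω : ℕ → ℝ) (T : ℕ) (v u : ℕ → H) : Prop :=
  IsProjOn C (v 0) (u 0) ∧ ∀ t : ℕ, t + 1 < T →
    IsProjOn C ((∑ j ∈ range (t + 2), ω j)⁻¹ •
      ((∑ j ∈ range (t + 1), ω j) • u t + ω (t + 1) • v (t + 1))) (u (t + 1))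

variable {C : Set H} {ω : ℕ → ℝ} {T : ℕ} {v u : ℕ → H}

namespace IsCBAPlusSequence

theorem mem (h : IsCBAPlusSequence C ω T v u) {t : ℕ} (ht : t < T) : u t ∈ C := by
  cases t with
  | zero => exact h.1.1
  | succ t => exact (h.2 t ht).1

theorem sum_inner_le (hC : Convex ℝ C) (hsmul : ∀ c : ℝ, 0 ≤ c → ∀ z ∈ C, c • z ∈ C)
    (hω : ∀ t < T, 0 < ω t) (h : IsCBAPlusSequence C ω T v u) {z : H} (hz : z ∈ C) {t : ℕ}
    (ht : t < T) :
    ∑ j ∈ range (t + 1), ω j * ⟪z, v j⟫ ≤ (∑ j ∈ range (t + 1), ω j) * ⟪z, u t⟫ := by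
  induction t with
  | zero =>
    simpa using mul_le_mul_of_nonneg_left (h.1.inner_le_inner hC hsmul hz) (hω 0 ht).le
  | succ t ih =>
    have hproj := (h.2 t ht).inner_le_inner hC hsmul hz
    rw [real_inner_smul_right, inv_mul_le_iff₀ (sum_range_succ_pos_of_forall_lt hω ht),
      inner_add_right, real_inner_smul_right, real_inner_smul_right] at hproj
    rw [sum_range_succ]
    linarith [ih (by omega)]

theorem sq_sum_mul_norm_sq_le (hC : Convex ℝ C) (hsmul : ∀ c : ℝ, 0 ≤ c → ∀ z ∈ C, c • z ∈ C)
    (hω : ∀ t < T, 0 < ω t) (h : IsCBAPlusSequence C ω T v u)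
    (horth : ∀ t, t + 1 < T → ⟪u t, v (t + 1)⟫ = 0) {t : ℕ} (ht : t < T) :
    (∑ j ∈ range (t + 1), ω j) ^ 2 * ‖u t‖ ^ 2 ≤ ∑ j ∈ range (t + 1), ω j ^ 2 * ‖v j‖ ^ 2 := by
  induction t with
  | zero =>
    have hproj := pow_le_pow_left₀ (norm_nonneg _) (h.1.norm_le hC hsmul) 2
    simpa using mul_le_mul_of_nonneg_left hproj (sq_nonneg (ω 0))
  | succ t ih =>
    have hS := sum_range_succ_pos_of_forall_lt hω ht
    have hproj := (h.2 t ht).norm_le hC hsmul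
    rw [norm_smul, Real.norm_of_nonneg (inv_nonneg.2 hS.le), le_inv_mul_iff₀ hS] at hproj
    have hpyth : ‖(∑ j ∈ range (t + 1), ω j) • u t + ω (t + 1) • v (t + 1)‖ ^ 2 =
        (∑ j ∈ range (t + 1), ω j) ^ 2 * ‖u t‖ ^ 2 + ω (t + 1) ^ 2 * ‖v (t + 1)‖ ^ 2 := by
      rw [norm_add_sq_real, real_inner_smul_left, real_inner_smul_right, horth t ht, norm_smul,
        norm_smul, mul_pow, mul_pow, Real.norm_eq_abs, Real.norm_eq_abs, sq_abs, sq_abs]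
      ring
    rw [sum_range_succ (fun j => ω j ^ 2 * ‖v j‖ ^ 2), ← mul_pow]
    nlinarith [ih (by omega), pow_le_pow_left₀ (by positivity) hproj 2]

theorem sum_inner_le_norm_mul_sqrt (hC : Convex ℝ C)
    (hsmul : ∀ c : ℝ, 0 ≤ c → ∀ z ∈ C, c • z ∈ C) (hω : ∀ t < T, 0 < ω t)
    (h : IsCBAPlusSequence C ω T v u) (horth : ∀ t, t + 1 < T → ⟪u t, v (t + 1)⟫ = 0)
    {z : H} (hz : z ∈ C) :
    ∑ t ∈ range T, ω t * ⟪z, v t⟫ ≤ ‖z‖ * √(∑ t ∈ range T, ω t ^ 2 * ‖v t‖ ^ 2) := by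
  obtain _ | t := T
  · simp
  have hS := sum_range_succ_pos_of_forall_lt hω (Nat.lt_succ_self t)
  have hnorm : (∑ j ∈ range (t + 1), ω j) * ‖u t‖ ≤
      √(∑ j ∈ range (t + 1), ω j ^ 2 * ‖v j‖ ^ 2) :=
    Real.le_sqrt_of_sq_le <| by
      rw [mul_pow]
      exact h.sq_sum_mul_norm_sq_le hC hsmul hω horth (by omega)
  calc ∑ j ∈ range (t + 1), ω j * ⟪z, v j⟫
      ≤ (∑ j ∈ range (t + 1), ω j) * ⟪z, u t⟫ := h.sum_inner_le hC hsmul hω hz (by omega)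
    _ ≤ (∑ j ∈ range (t + 1), ω j) * (‖z‖ * ‖u t‖) :=
        mul_le_mul_of_nonneg_left (real_inner_le_norm z (u t)) hS.le
    _ = ‖z‖ * ((∑ j ∈ range (t + 1), ω j) * ‖u t‖) := by ring
    _ ≤ _ := mul_le_mul_of_nonneg_left hnorm (norm_nonneg z)

end IsCBAPlusSequence

end CBAPlus

theorem sqrt_sum_sq_mul_norm_sq_le {ι E : Type*} [SeminormedAddCommGroup E] {s : Finset ι}
    {w : ι → ℝ} {v : ι → E} {M : ℝ} (hv : ∀ i ∈ s, ‖v i‖ ≤ M) :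
    √(∑ i ∈ s, w i ^ 2 * ‖v i‖ ^ 2) ≤ M * √(∑ i ∈ s, w i ^ 2) := by
  rcases s.eq_empty_or_nonempty with rfl | ⟨i, hi⟩
  · simp
  have hM : 0 ≤ M := (norm_nonneg _).trans (hv i hi)
  rw [← Real.sqrt_sq hM, ← Real.sqrt_mul (sq_nonneg M), mul_sum]
  refine Real.sqrt_le_sqrt (sum_le_sum fun j hj => ?_)
  rw [mul_comm (M ^ 2)]
  exact mul_le_mul_of_nonneg_left (pow_le_pow_left₀ (norm_nonneg _) (hv j hj) 2) (sq_nonneg _)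

theorem norm_toLp_le {E : Type*} [SeminormedAddCommGroup E] {a M : ℝ} {y : E} (ha : |a| ≤ M)
    (hy : ‖y‖ ≤ M) : ‖WithLp.toLp 2 (a, y)‖ ≤ √2 * M := by
  have hM : 0 ≤ M := (abs_nonneg a).trans ha
  rw [WithLp.prod_norm_eq_of_L2, ← Real.sqrt_sq hM, ← Real.sqrt_mul zero_le_two]
  refine Real.sqrt_le_sqrt ?_
  have := sq_le_sq' (neg_le_of_abs_le ha) (le_of_abs_le ha)
  have := pow_le_pow_left₀ (norm_nonneg y) hy 2
  simp only [WithLp.toLp_fst, WithLp.toLp_snd, Real.norm_eq_abs, sq_abs]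
  linarith

section Payoff

variable {E : Type*} [NormedAddCommGroup E] [InnerProductSpace ℝ E]

def payoff (κ : ℝ) (f x : E) : WithLp 2 (ℝ × E) := WithLp.toLp 2 (⟪f, x⟫ / κ, -f)

theorem inner_toLp_payoff (κ a : ℝ) (y f x : E) :
    ⟪WithLp.toLp 2 (a, y), payoff κ f x⟫ = a * ⟪f, x⟫ / κ - ⟪f, y⟫ := by
  simp [payoff, real_inner_comm y f]
  ring

theorem sum_mul_inner_toLp_payoff {ι : Type*} (s : Finset ι) {κ : ℝ} (hκ : κ ≠ 0) (w : ι → ℝ)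
    (f x : ι → E) (y : E) :
    ∑ i ∈ s, w i * ⟪WithLp.toLp 2 (κ, y), payoff κ (f i) (x i)⟫ =
      ∑ i ∈ s, w i * ⟪f i, x i⟫ - ∑ i ∈ s, w i * ⟪f i, y⟫ := by
  simp only [inner_toLp_payoff, mul_div_cancel_left₀ _ hκ, mul_sub, sum_sub_distrib]

theorem norm_payoff_le {κ L : ℝ} {f x : E} (hκ : 0 < κ) (hx : ‖x‖ ≤ κ) (hf : ‖f‖ ≤ L) :
    ‖payoff κ f x‖ ≤ √2 * L := by
  refine norm_toLp_le ?_ (by rwa [norm_neg])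
  rw [abs_div, abs_of_pos hκ, div_le_iff₀ hκ]
  exact (abs_real_inner_le_norm f x).trans
    (mul_le_mul hf hx (norm_nonneg x) ((norm_nonneg f).trans hf))

end Payoff

section LiftedCone

variable {n : ℕ} {κ : ℝ} {X : Set (EuclideanSpace ℝ (Fin n))}

theorem toLp_mem_coneOf {y : EuclideanSpace ℝ (Fin n)} (hy : y ∈ X) :
    WithLp.toLp 2 (κ, y) ∈ coneOf n κ X :=
  ⟨1, zero_le_one, y, hy, (one_smul ℝ _).symm⟩

theorem smul_mem_coneOf {c : ℝ} (hc : 0 ≤ c) {z : Rone n} (hz : z ∈ coneOf n κ X) :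
    c • z ∈ coneOf n κ X := by
  obtain ⟨a, ha, y, hy, rfl⟩ := hz
  exact ⟨c * a, mul_nonneg hc ha, y, hy, smul_smul c a _⟩

theorem add_mem_coneOf (hX : Convex ℝ X) {z w : Rone n} (hz : z ∈ coneOf n κ X)
    (hw : w ∈ coneOf n κ X) : z + w ∈ coneOf n κ X := by
  obtain ⟨a, ha, x, hx, rfl⟩ := hz
  obtain ⟨b, hb, y, hy, rfl⟩ := hw
  rcases (add_nonneg ha hb).eq_or_lt with hab | hab
  · obtain ⟨rfl, rfl⟩ : a = 0 ∧ b = 0 := ⟨by linarith, by linarith⟩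
    exact ⟨0, le_rfl, x, hx, by simp⟩
  refine ⟨a + b, hab.le, (a / (a + b)) • x + (b / (a + b)) • y,
    hX hx hy (by positivity) (by positivity) (by field_simp), ?_⟩
  simp only [← WithLp.toLp_smul, ← WithLp.toLp_add, Prod.smul_mk, Prod.mk_add_mk, smul_add,
    smul_smul]
  congr 2
  · ring
  · field_simp

theorem convex_coneOf (hX : Convex ℝ X) : Convex ℝ (coneOf n κ X) :=
  fun _ hz _ hw _ _ hs ht _ => add_mem_coneOf hX (smul_mem_coneOf hs hz) (smul_mem_coneOf ht hw)

theorem inner_payoff_eq_zero_of_mem_coneOf (hκ : κ ≠ 0) {u : Rone n} (hu : u ∈ coneOf n κ X)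
    (hu0 : u ≠ 0) (f : EuclideanSpace ℝ (Fin n)) :
    ⟪u, payoff κ f ((κ / u.ofLp.1) • u.ofLp.2)⟫ = 0 := by
  obtain ⟨a, -, y, -, rfl⟩ := hu
  have ha : a ≠ 0 := by rintro rfl; simp at hu0
  simp only [← WithLp.toLp_smul, Prod.smul_mk, smul_eq_mul, inner_toLp_payoff, smul_smul,
    inner_smul_right]
  field_simp
  ring

end LiftedCone

/-- Sequences are indexed from `0`, so index `t ∈ {0, …, T−1}` is round `t+1`; the recursion
`u_{t+1} = π_C((S_t·u_t + ω_{t+1}·v_{t+1})/S_{t+1})` (1-based, `S_t = Σ_{τ≤t} ω_τ`) becomes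
the 0-based recursion below. -/
theorem cbaPlus_weighted_regret_general (n T : ℕ)
    (X : Set (EuclideanSpace ℝ (Fin n)))
    (hXne : X.Nonempty) (hXconv : Convex ℝ X)
    (κ L : ℝ) (hκ : IsGreatest ((fun x => ‖x‖) '' X) κ) (hκpos : 0 < κ)
    (ω : ℕ → ℝ) (hω : ∀ t < T, 0 < ω t)
    (f x : ℕ → EuclideanSpace ℝ (Fin n))
    (hL : ∀ t < T, ‖f t‖ ≤ L)
    (hxmem : ∀ t < T, x t ∈ X)
    (v u : ℕ → Rone n)
    (hv : ∀ t < T, v t = (WithLp.toLp 2 (⟪f t, x t⟫ / κ, -f t) : Rone n))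
    (hu0 : IsProjOn (coneOf n κ X) (v 0) (u 0))
    (hurec : ∀ t : ℕ, t + 1 < T →
      IsProjOn (coneOf n κ X)
        ((∑ j ∈ Finset.range (t + 2), ω j)⁻¹ •
          ((∑ j ∈ Finset.range (t + 1), ω j) • u t + ω (t + 1) • v (t + 1)))
        (u (t + 1)))
    (hxplay : ∀ t : ℕ, t + 1 < T → u t ≠ 0 →
      x (t + 1) = (κ / (u t).ofLp.1) • (u t).ofLp.2) :
    (∑ t ∈ Finset.range T, ω t * ⟪f t, x t⟫)
        - sInf ((fun z => ∑ t ∈ Finset.range T, ω t * ⟪f t, z⟫) '' X)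
      ≤ 2 * κ * L * Real.sqrt (∑ t ∈ Finset.range T, ω t ^ 2) := by
  have hκX : ∀ y ∈ X, ‖y‖ ≤ κ := fun y hy => hκ.2 (Set.mem_image_of_mem _ hy)
  have hseq : IsCBAPlusSequence (coneOf n κ X) ω T v u := ⟨hu0, hurec⟩
  have horth : ∀ t, t + 1 < T → ⟪u t, v (t + 1)⟫ = 0 := by
    intro t ht
    by_cases hu : u t = 0
    · rw [hu, inner_zero_left]
    rw [hv _ ht, hxplay t ht hu]
    exact inner_payoff_eq_zero_of_mem_coneOf hκpos.ne' (hseq.mem (by omega)) hu _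
  have hvL : ∀ t ∈ range T, ‖v t‖ ≤ √2 * L := fun t ht => by
    rw [mem_range] at ht
    rw [hv t ht]
    exact norm_payoff_le hκpos (hκX _ (hxmem t ht)) (hL t ht)
  rw [sub_le_comm]
  refine le_csInf (hXne.image _) (Set.forall_mem_image.2 fun y hy => sub_le_comm.1 ?_)
  calc ∑ t ∈ range T, ω t * ⟪f t, x t⟫ - ∑ t ∈ range T, ω t * ⟪f t, y⟫
      = ∑ t ∈ range T, ω t * ⟪WithLp.toLp 2 (κ, y), v t⟫ := by
        rw [← sum_mul_inner_toLp_payoff _ hκpos.ne']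
        exact sum_congr rfl fun t ht => by rw [hv t (mem_range.1 ht)]; rfl
    _ ≤ ‖WithLp.toLp 2 (κ, y)‖ * √(∑ t ∈ range T, ω t ^ 2 * ‖v t‖ ^ 2) :=
        hseq.sum_inner_le_norm_mul_sqrt (convex_coneOf hXconv)
          (fun _ hc _ hz => smul_mem_coneOf hc hz) hω horth (toLp_mem_coneOf hy)
    _ ≤ (√2 * κ) * (√2 * L * √(∑ t ∈ range T, ω t ^ 2)) :=
        mul_le_mul (norm_toLp_le (abs_of_pos hκpos).le (hκX y hy))
          (sqrt_sum_sq_mul_norm_sq_le hvL) (Real.sqrt_nonneg _) (by positivity)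
    _ = 2 * κ * L * √(∑ t ∈ range T, ω t ^ 2) := by
        linear_combination κ * L * √(∑ t ∈ range T, ω t ^ 2) * Real.mul_self_sqrt zero_le_two

/-- Theorem A.3 of the paper: CBA⁺ with weights `ω` on both decisions and
payoffs: the `ω`-weighted regret is at most `2κL·√(Σ_t ω_t²)`.  Sequences are indexed from
`0`, so index `t ∈ {0, …, T−1}` is round `t+1`; the recursion
`u_{t+1} = π_C((S_t·u_t + ω_{t+1}·v_{t+1})/S_{t+1})` (1-based, `S_t = Σ_{τ≤t} ω_τ`) becomes
the 0-based recursion below. -/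
theorem cbaPlus_weighted_regret (n T : ℕ) (hT : 1 ≤ T)
    (X : Set (EuclideanSpace ℝ (Fin n)))
    (hXne : X.Nonempty) (hXconv : Convex ℝ X) (hXcomp : IsCompact X)
    (κ L : ℝ) (hκ : IsGreatest ((fun x => ‖x‖) '' X) κ) (hκpos : 0 < κ)
    (ω : ℕ → ℝ) (hω : ∀ t < T, 0 < ω t)
    (f x : ℕ → EuclideanSpace ℝ (Fin n))
    (hL : ∀ t < T, ‖f t‖ ≤ L)
    (hxmem : ∀ t < T, x t ∈ X)
    (v u : ℕ → Rone n)
    (hv : ∀ t < T, v t = (WithLp.toLp 2 (⟪f t, x t⟫ / κ, -f t) : Rone n))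
    (hu0 : IsProjOn (coneOf n κ X) (v 0) (u 0))
    (hurec : ∀ t : ℕ, t + 1 < T →
      IsProjOn (coneOf n κ X)
        ((∑ j ∈ Finset.range (t + 2), ω j)⁻¹ •
          ((∑ j ∈ Finset.range (t + 1), ω j) • u t + ω (t + 1) • v (t + 1)))
        (u (t + 1)))
    (hxplay : ∀ t : ℕ, t + 1 < T → u t ≠ 0 →
      x (t + 1) = (κ / (u t).ofLp.1) • (u t).ofLp.2) :
    (∑ t ∈ Finset.range T, ω t * ⟪f t, x t⟫)
        - sInf ((fun z => ∑ t ∈ Finset.range T, ω t * ⟪f t, z⟫) '' X)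
      ≤ 2 * κ * L * Real.sqrt (∑ t ∈ Finset.range T, ω t ^ 2) :=
  cbaPlus_weighted_regret_general n T X hXne hXconv κ L hκ hκpos ω hω f x hL hxmem v u hv hu0 hurec
    hxplay
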